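/- arXiv:1412.2657 — 3 statements merged into one kernel-verified Lean document; each statement's English description precedes it below -/
import Mathlib

section
/- Let R satisfy (H1), a, b ∈ ℝ₊ᵈ with a ≤ b componentwise, and let (y^{(a)}, z^{(a)}) and (y^{(b)}, z^{(b)}) solve SP({a+Σu_n}, R) and SP({b+Σu_n}, R) for the same sequence u_n. Then for all n ≥ 1: Δy_n^{(a)} ≥ Δy_n^{(b)}, z_n^{(a)} ≤ z_n^{(b)}, and 0 ≤ y_n^{(a)} − y_n^{(b)} ≤ R⁻¹(b − a) componentwise. -/
/-!
Write `Q = Pᵀ ≥ 0`. Step `n + 1` of the Skorokhod problem is the complementarity problem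
`LCP(z_n + u_{n+1}, 1 - Q)`, and such problems are monotone in their data: raising `η` lowers
the push `ξ` and raises the state `ζ`. Both comparisons come from a maximum principle for
`1 - Q`, which holds as soon as some `h > 0` has `Q h < h`. Such an `h` exists for every large
`t` in place of `1`, and continuation down to `t = 1` works because `t • 1 - Q` stays invertible
for `t ≥ 1`, by the bound on the spectral radius. Induction on `n` gives `za ≤ zb` and the
comparison of the increments. Finally `z_n = a + Σ u + (1 - Q) y_n`, so `1 - Q` maps
`(1 - Q)⁻¹ (b - a) - (ya_n - yb_n)` to `zb_n - za_n ≥ 0`, and the maximum principle gives the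
upper bound.
-/

open Matrix Finset MeasureTheory ProbabilityTheory

noncomputable section

/-- A pair `(ξ, ζ)` solves the linear complementarity problem `LCP(η, M)`. -/
def IsLCPSol {d : ℕ} (M : Matrix (Fin d) (Fin d) ℝ) (η ξ ζ : Fin d → ℝ) : Prop :=
  ζ = η + M *ᵥ ξ ∧ (∀ i, 0 ≤ ξ i) ∧ (∀ i, 0 ≤ ζ i) ∧ ξ ⬝ᵥ ζ = 0

/-- `(y, z)` solves the Skorokhod problem `SP({a + Σ u_n}, M)` in the orthant. -/
def IsSPSol {d : ℕ} (M : Matrix (Fin d) (Fin d) ℝ) (a : Fin d → ℝ)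
    (u y z : ℕ → Fin d → ℝ) : Prop :=
  y 0 = 0 ∧ z 0 = a ∧
  ∀ n, 1 ≤ n →
    z n = z (n - 1) + u n + M *ᵥ (y n - y (n - 1)) ∧
    (∀ i, 0 ≤ z n i) ∧ (∀ i, 0 ≤ y n i - y (n - 1) i) ∧
    z n ⬝ᵥ (y n - y (n - 1)) = 0

open Filter Topology

namespace Matrix

variable {ι : Type*} [Fintype ι]

/-- By the Collatz–Wielandt formula, for `Q ≥ 0` this says exactly that `t` exceeds the
spectral radius of `Q`. -/
def HasStrictSubeigenvector (Q : Matrix ι ι ℝ) (t : ℝ) : Prop :=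
  ∃ h : ι → ℝ, (∀ i, 0 < h i) ∧ ∀ i, (Q *ᵥ h) i < t * h i

theorem mulVec_mono_of_nonneg {Q : Matrix ι ι ℝ} (hQ : ∀ i j, 0 ≤ Q i j) {v w : ι → ℝ}
    (hvw : v ≤ w) : Q *ᵥ v ≤ Q *ᵥ w := fun i =>
  Finset.sum_le_sum fun j _ => mul_le_mul_of_nonneg_left (hvw j) (hQ i j)

namespace HasStrictSubeigenvector

variable {Q : Matrix ι ι ℝ} {t : ℝ}

theorem mono (hQt : HasStrictSubeigenvector Q t) {s : ℝ} (hts : t ≤ s) :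
    HasStrictSubeigenvector Q s :=
  let ⟨h, hpos, hlt⟩ := hQt
  ⟨h, hpos, fun i => (hlt i).trans_le (mul_le_mul_of_nonneg_right hts (hpos i).le)⟩

theorem exists_lt (hQt : HasStrictSubeigenvector Q t) : ∃ s < t, HasStrictSubeigenvector Q s := by
  obtain ⟨h, hpos, hlt⟩ := hQt
  have hnear : ∀ᶠ s in 𝓝[<] t, ∀ i, (Q *ᵥ h) i < s * h i :=
    eventually_all.2 fun i => nhdsWithin_le_nhds <|
      ((continuous_id.mul continuous_const).tendsto t).eventually_const_lt (hlt i)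
  obtain ⟨s, hs, hst⟩ := (hnear.and self_mem_nhdsWithin).exists
  exact ⟨s, hst, h, hpos, hs⟩

variable (Q) in
theorem eventually_atTop : ∀ᶠ t in atTop, HasStrictSubeigenvector Q t :=
  (eventually_all.2 fun i => eventually_gt_atTop ((Q *ᵥ 1) i)).mono
    fun _ ht => ⟨1, fun _ => one_pos, fun i => by simpa using ht i⟩

end HasStrictSubeigenvector

variable [DecidableEq ι]

theorem smul_one_sub_mulVec_apply (Q : Matrix ι ι ℝ) (t : ℝ) (w : ι → ℝ) (i : ι) :
    ((t • 1 - Q) *ᵥ w) i = t * w i - (Q *ᵥ w) i := by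
  simp [sub_mulVec, smul_mulVec]

theorem isUnit_smul_one_sub_transpose_of_spectralRadius_lt_one {P : Matrix ι ι ℝ}
    (hP : spectralRadius ℝ P < 1) {t : ℝ} (ht : 1 ≤ t) : IsUnit (t • 1 - Pᵀ) := by
  have hnorm : spectralRadius ℝ P < ‖t‖₊ :=
    hP.trans_le (by exact_mod_cast ht.trans (le_abs_self t))
  have := spectrum.mem_resolventSet_of_spectralRadius_lt hnorm
  rw [spectrum.mem_resolventSet_iff, Algebra.algebraMap_eq_smul_one, ← isUnit_transpose] at this
  simpa [transpose_sub] using this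

namespace HasStrictSubeigenvector

variable {Q : Matrix ι ι ℝ} {t : ℝ}

/-- The maximum principle: compare `w` with the largest multiple `c • h` it touches. -/
theorem nonpos_of_mulVec_nonpos (hQ : ∀ i j, 0 ≤ Q i j) (hQt : HasStrictSubeigenvector Q t)
    {w : ι → ℝ} (hw : ∀ i, 0 < w i → ((t • 1 - Q) *ᵥ w) i ≤ 0) : w ≤ 0 := by
  obtain ⟨h, hpos, hlt⟩ := hQt
  by_contra hw'
  obtain ⟨i₀, hi₀⟩ : ∃ i, 0 < w i := by simpa [Pi.le_def] using hw'
  obtain ⟨i, -, hmax⟩ := Finset.univ.exists_max_image (fun j => w j / h j) ⟨i₀, mem_univ i₀⟩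
  set c := w i / h i
  have hc : 0 < c := (div_pos hi₀ (hpos i₀)).trans_le (hmax i₀ (mem_univ i₀))
  have hwc : w ≤ c • h := fun j => (div_le_iff₀ (hpos j)).1 (hmax j (mem_univ j))
  have hwi : w i = c * h i := (div_mul_cancel₀ _ (hpos i).ne').symm
  have hti := hw i (hwi ▸ mul_pos hc (hpos i))
  rw [smul_one_sub_mulVec_apply] at hti
  have : t * w i < t * w i := calc
    t * w i ≤ (Q *ᵥ w) i := by linarith
    _ ≤ (Q *ᵥ (c • h)) i := mulVec_mono_of_nonneg hQ hwc i
    _ = c * (Q *ᵥ h) i := by rw [mulVec_smul, Pi.smul_apply, smul_eq_mul]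
    _ < c * (t * h i) := mul_lt_mul_of_pos_left (hlt i) hc
    _ = t * w i := by rw [hwi]; ring
  exact lt_irrefl _ this

theorem nonneg_of_mulVec_nonneg (hQ : ∀ i j, 0 ≤ Q i j) (hQt : HasStrictSubeigenvector Q t)
    {w : ι → ℝ} (hw : 0 ≤ (t • 1 - Q) *ᵥ w) : 0 ≤ w := by
  have := hQt.nonpos_of_mulVec_nonpos hQ (w := -w) fun i _ => by
    simpa [mulVec_neg] using hw i
  simpa using this

theorem isUnit (hQ : ∀ i j, 0 ≤ Q i j) (hQt : HasStrictSubeigenvector Q t) :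
    IsUnit (t • 1 - Q) := by
  refine mulVec_injective_iff_isUnit.1 fun v w hvw => le_antisymm ?_ ?_ <;>
    refine sub_nonneg.1 (hQt.nonneg_of_mulVec_nonneg hQ ?_) <;> simp [mulVec_sub, hvw]

theorem inv_mulVec_nonneg (hQ : ∀ i j, 0 ≤ Q i j) (hQt : HasStrictSubeigenvector Q t)
    {v : ι → ℝ} (hv : 0 ≤ v) : 0 ≤ (t • 1 - Q)⁻¹ *ᵥ v := by
  refine hQt.nonneg_of_mulVec_nonneg hQ ?_
  rwa [mulVec_mulVec, mul_nonsing_inv _ ((isUnit_iff_isUnit_det _).1 (hQt.isUnit hQ)),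
    one_mulVec]

theorem of_inv_mulVec_nonneg (hQ : ∀ i j, 0 ≤ Q i j) (ht : 0 < t) (hunit : IsUnit (t • 1 - Q))
    (hinv : 0 ≤ (t • 1 - Q)⁻¹ *ᵥ 1) : HasStrictSubeigenvector Q t := by
  set h := (t • 1 - Q)⁻¹ *ᵥ 1
  have hh : ∀ i, t * h i - (Q *ᵥ h) i = 1 := fun i => by
    rw [← smul_one_sub_mulVec_apply, mulVec_mulVec,
      mul_nonsing_inv _ ((isUnit_iff_isUnit_det _).1 hunit), one_mulVec, Pi.one_apply]
  have hQh : 0 ≤ Q *ᵥ h := by simpa using mulVec_mono_of_nonneg hQ hinv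
  refine ⟨h, fun i => ?_, fun i => by linarith [hh i]⟩
  have hQhi : 0 ≤ (Q *ᵥ h) i := hQh i
  exact pos_of_mul_pos_right (by linarith [hh i]) ht.le

/-- Inverse-positivity passes to the limit `s ↓ t` by continuity of the inverse. -/
theorem of_forall_gt (hQ : ∀ i j, 0 ≤ Q i j) (ht : 0 < t) (hunit : IsUnit (t • 1 - Q))
    (habove : ∀ s, t < s → HasStrictSubeigenvector Q s) : HasStrictSubeigenvector Q t := by
  refine of_inv_mulVec_nonneg hQ ht hunit ?_
  have hinv : ContinuousAt Inv.inv (t • 1 - Q) := continuousAt_matrix_inv _ <| by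
    rw [Ring.inverse_eq_inv']
    exact continuousAt_inv₀ ((isUnit_iff_isUnit_det _).1 hunit).ne_zero
  have hcont : ContinuousAt (fun s : ℝ => (s • 1 - Q)⁻¹ *ᵥ 1) t :=
    (continuous_id.matrix_mulVec continuous_const).continuousAt.comp
      (ContinuousAt.comp (f := fun s : ℝ => s • (1 : Matrix ι ι ℝ) - Q) hinv (by fun_prop))
  have hlim : Tendsto (fun s : ℝ => (s • 1 - Q)⁻¹ *ᵥ 1) (𝓝[>] t) (𝓝 ((t • 1 - Q)⁻¹ *ᵥ 1)) :=
    hcont.tendsto.mono_left nhdsWithin_le_nhds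
  exact ge_of_tendsto hlim (eventually_nhdsWithin_of_forall fun s hs =>
    (habove s hs).inv_mulVec_nonneg hQ zero_le_one)

end HasStrictSubeigenvector

open HasStrictSubeigenvector in
/-- The infimum `c` of the `t ≥ 1` admitting a strict subeigenvector is attained (`of_forall_gt`)
and cannot be approached from below (`exists_lt`), so `c = 1`. -/
theorem hasStrictSubeigenvector_one {Q : Matrix ι ι ℝ} (hQ : ∀ i j, 0 ≤ Q i j)
    (hunit : ∀ t : ℝ, 1 ≤ t → IsUnit (t • 1 - Q)) : HasStrictSubeigenvector Q 1 := by
  set G := {t : ℝ | 1 ≤ t ∧ HasStrictSubeigenvector Q t}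
  obtain ⟨t₀, ht₀, ht₀1⟩ := ((eventually_atTop Q).and (eventually_ge_atTop 1)).exists
  have hG : G.Nonempty := ⟨t₀, ht₀1, ht₀⟩
  set c := sInf G
  have hc1 : 1 ≤ c := le_csInf hG fun t ht => ht.1
  have hc : HasStrictSubeigenvector Q c :=
    of_forall_gt hQ (one_pos.trans_le hc1) (hunit c hc1) fun t hct =>
      let ⟨_, hs, hst⟩ := exists_lt_of_csInf_lt hG hct
      hs.2.mono hst.le
  suffices c = 1 from this ▸ hc
  by_contra hne
  obtain ⟨s, hsc, hs⟩ := hc.exists_lt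
  have : c ≤ max s 1 :=
    csInf_le ⟨1, fun _ h => h.1⟩ ⟨le_max_right _ _, hs.mono (le_max_left _ _)⟩
  exact (max_lt hsc (hc1.lt_of_ne' hne)).not_ge this

end Matrix

namespace IsLCPSol

variable {d : ℕ} {M Q : Matrix (Fin d) (Fin d) ℝ} {η η' ξ ξ' ζ ζ' : Fin d → ℝ}

theorem mul_eq_zero (h : IsLCPSol M η ξ ζ) (i : Fin d) : ξ i * ζ i = 0 :=
  (Finset.sum_eq_zero_iff_of_nonneg fun j _ => mul_nonneg (h.2.1 j) (h.2.2.1 j)).1 h.2.2.2 i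
    (mem_univ i)

theorem mulVec_eq (h : IsLCPSol M η ξ ζ) : M *ᵥ ξ = ζ - η :=
  eq_sub_iff_add_eq'.2 h.1.symm

theorem push_le_of_le (hQ : ∀ i j, 0 ≤ Q i j) (hQ1 : HasStrictSubeigenvector Q 1)
    (hη : η ≤ η') (h : IsLCPSol (1 - Q) η ξ ζ) (h' : IsLCPSol (1 - Q) η' ξ' ζ') : ξ' ≤ ξ := by
  refine sub_nonpos.1 (hQ1.nonpos_of_mulVec_nonpos hQ fun i hi => ?_)
  have hζ'i : ζ' i = 0 := (_root_.mul_eq_zero.1 (h'.mul_eq_zero i)).resolve_left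
    (h.2.1 i |>.trans_lt (sub_pos.1 hi)).ne'
  rw [one_smul, mulVec_sub, h.mulVec_eq, h'.mulVec_eq]
  simp only [Pi.sub_apply, hζ'i]
  linarith [hη i, h.2.2.1 i]

theorem state_le_of_le (hQ : ∀ i j, 0 ≤ Q i j) (hQ1 : HasStrictSubeigenvector Q 1)
    (hη : η ≤ η') (h : IsLCPSol (1 - Q) η ξ ζ) (h' : IsLCPSol (1 - Q) η' ξ' ζ') : ζ ≤ ζ' := by
  intro i
  rcases _root_.mul_eq_zero.1 (h.mul_eq_zero i) with hξi | hζi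
  · have hξ' := h.push_le_of_le hQ hQ1 hη h'
    have hξ'i : ξ' i = 0 := le_antisymm (hξi ▸ hξ' i) (h'.2.1 i)
    rw [h.1, h'.1]
    simp only [Pi.add_apply, sub_mulVec, one_mulVec, Pi.sub_apply, hξi, hξ'i]
    linarith [hη i, mulVec_mono_of_nonneg hQ hξ' i]
  · exact hζi ▸ h'.2.2.1 i

end IsLCPSol

namespace IsSPSol

variable {d : ℕ} {M Q : Matrix (Fin d) (Fin d) ℝ} {a b : Fin d → ℝ}
  {u y z ya za yb zb : ℕ → Fin d → ℝ}

theorem isLCPSol_succ (h : IsSPSol M a u y z) (n : ℕ) :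
    IsLCPSol M (z n + u (n + 1)) (y (n + 1) - y n) (z (n + 1)) := by
  obtain ⟨hrec, hz, hy, hcomp⟩ := h.2.2 (n + 1) n.succ_pos
  simp only [Nat.add_sub_cancel] at hrec hy hcomp
  exact ⟨hrec, hy, hz, by rwa [dotProduct_comm]⟩

theorem eq_add_sum_add_mulVec (h : IsSPSol M a u y z) (n : ℕ) :
    z n = a + ∑ ℓ ∈ range n, u (ℓ + 1) + M *ᵥ y n := by
  induction n with
  | zero => simp [h.1, h.2.1]
  | succ n ih =>
    rw [(h.isLCPSol_succ n).1, ih, sum_range_succ, mulVec_sub]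
    abel

theorem state_le_of_le (hQ : ∀ i j, 0 ≤ Q i j) (hQ1 : HasStrictSubeigenvector Q 1) (hab : a ≤ b)
    (ha : IsSPSol (1 - Q) a u ya za) (hb : IsSPSol (1 - Q) b u yb zb) (n : ℕ) : za n ≤ zb n := by
  induction n with
  | zero => rw [ha.2.1, hb.2.1]; exact hab
  | succ n ih =>
    exact (ha.isLCPSol_succ n).state_le_of_le hQ hQ1 (add_le_add_left ih _) (hb.isLCPSol_succ n)

theorem increment_le_of_le (hQ : ∀ i j, 0 ≤ Q i j) (hQ1 : HasStrictSubeigenvector Q 1) (hab : a ≤ b)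
    (ha : IsSPSol (1 - Q) a u ya za) (hb : IsSPSol (1 - Q) b u yb zb) (n : ℕ) :
    yb (n + 1) - yb n ≤ ya (n + 1) - ya n :=
  (ha.isLCPSol_succ n).push_le_of_le hQ hQ1
    (add_le_add_left (ha.state_le_of_le hQ hQ1 hab hb n) _) (hb.isLCPSol_succ n)

theorem push_sub_nonneg (hQ : ∀ i j, 0 ≤ Q i j) (hQ1 : HasStrictSubeigenvector Q 1) (hab : a ≤ b)
    (ha : IsSPSol (1 - Q) a u ya za) (hb : IsSPSol (1 - Q) b u yb zb) (n : ℕ) :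
    0 ≤ ya n - yb n := by
  induction n with
  | zero => simp [ha.1, hb.1]
  | succ n ih =>
    have hinc := sub_nonneg.2 (ha.increment_le_of_le hQ hQ1 hab hb n)
    calc 0 ≤ (ya n - yb n) + ((ya (n + 1) - ya n) - (yb (n + 1) - yb n)) := add_nonneg ih hinc
      _ = ya (n + 1) - yb (n + 1) := by abel

theorem push_sub_le_inv_mulVec (hQ : ∀ i j, 0 ≤ Q i j) (hQ1 : HasStrictSubeigenvector Q 1)
    (hab : a ≤ b) (ha : IsSPSol (1 - Q) a u ya za) (hb : IsSPSol (1 - Q) b u yb zb) (n : ℕ) :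
    ya n - yb n ≤ (1 - Q)⁻¹ *ᵥ (b - a) := by
  have hunit : IsUnit (1 - Q) := by simpa using hQ1.isUnit hQ
  have hgap : (1 - Q) *ᵥ ((1 - Q)⁻¹ *ᵥ (b - a) - (ya n - yb n)) = zb n - za n := by
    rw [mulVec_sub, mulVec_mulVec, mul_nonsing_inv _ ((isUnit_iff_isUnit_det _).1 hunit),
      one_mulVec, mulVec_sub, ha.eq_add_sum_add_mulVec n, hb.eq_add_sum_add_mulVec n]
    abel
  refine sub_nonneg.1 (hQ1.nonneg_of_mulVec_nonneg hQ ?_)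
  rw [one_smul, hgap]
  exact sub_nonneg.2 (ha.state_le_of_le hQ hQ1 hab hb n)

end IsSPSol

theorem stmt_5_general {d : ℕ} (P : Matrix (Fin d) (Fin d) ℝ)
    (hnonneg : ∀ i j, 0 ≤ P i j)
    (hspec : spectralRadius ℝ P < 1)
    (a b : Fin d → ℝ) (hab : a ≤ b)
    (u ya za yb zb : ℕ → Fin d → ℝ)
    (hSPa : IsSPSol (1 - Pᵀ) a u ya za)
    (hSPb : IsSPSol (1 - Pᵀ) b u yb zb) :
    ∀ n, 1 ≤ n →
      (yb n - yb (n - 1) ≤ ya n - ya (n - 1)) ∧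
      (za n ≤ zb n) ∧
      (0 ≤ ya n - yb n) ∧ (ya n - yb n ≤ (1 - Pᵀ)⁻¹ *ᵥ (b - a)) := by
  have hQ : ∀ i j, 0 ≤ Pᵀ i j := fun i j => hnonneg j i
  have hQ1 : HasStrictSubeigenvector Pᵀ 1 :=
    hasStrictSubeigenvector_one hQ fun _ =>
      isUnit_smul_one_sub_transpose_of_spectralRadius_lt_one hspec
  intro n hn
  obtain ⟨m, rfl⟩ := Nat.exists_eq_add_of_le' hn
  rw [Nat.add_sub_cancel]
  exact ⟨hSPa.increment_le_of_le hQ hQ1 hab hSPb m, hSPa.state_le_of_le hQ hQ1 hab hSPb _,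
    hSPa.push_sub_nonneg hQ hQ1 hab hSPb _, hSPa.push_sub_le_inv_mulVec hQ hQ1 hab hSPb _⟩

theorem stmt_5 {d : ℕ} (P : Matrix (Fin d) (Fin d) ℝ)
    (hdiag : ∀ i, P i i = 0) (hnonneg : ∀ i j, 0 ≤ P i j)
    (hspec : spectralRadius ℝ P < 1)
    (a b : Fin d → ℝ) (ha : ∀ i, 0 ≤ a i) (hb : ∀ i, 0 ≤ b i) (hab : a ≤ b)
    (u ya za yb zb : ℕ → Fin d → ℝ)
    (hSPa : IsSPSol (1 - Pᵀ) a u ya za)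
    (hSPb : IsSPSol (1 - Pᵀ) b u yb zb) :
    ∀ n, 1 ≤ n →
      (yb n - yb (n - 1) ≤ ya n - ya (n - 1)) ∧
      (za n ≤ zb n) ∧
      (0 ≤ ya n - yb n) ∧ (ya n - yb n ≤ (1 - Pᵀ)⁻¹ *ᵥ (b - a)) :=
  stmt_5_general P hnonneg hspec a b hab u ya za yb zb hSPa hSPb
end
end

section
/- Let R satisfy (H1), fix n ≥ 1, u_1,…,u_n ∈ ℝᵈ, and a ∈ ℝ₊ᵈ. Let (y^{(a)}, z^{(a)}) solve SP({a+Σu_k}, R), and let (v, w) solve SP({Σ_{ℓ≤k} û_ℓ}, R⁻¹) where û_k := −R⁻¹u_{n+1−k}. If Δy_n^{(a)} ≫ 0, then w_k ≫ 0 for all 1 ≤ k ≤ n (so the boundary hitting time σ_bd > n) and w_n ≫ R⁻¹a. -/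
/-!
Running the dual recursion backwards from time `n` against the primal one gives the
time-reversal identity `w_k = (y_n - y_{n-k}) + R⁻¹ z_{n-k} + R⁻¹ v_k` as soon as `z_n = 0`,
which complementarity forces when `Δy_n ≫ 0`. Since `y` is nondecreasing,
`y_n - y_{n-k} ≥ Δy_n ≫ 0`, so `w_k ≫ R⁻¹ z_{n-k}` once `R⁻¹` is entrywise nonnegative,
and `z_0 = a`.

`spectralRadius ℝ P` only sees the real spectrum, so the Neumann series of `(1 - Pᵀ)⁻¹` is not
available directly. Instead, nonnegativity of `(1 - c • Pᵀ)⁻¹` is carried by continuous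
induction from `c = 0` to `c = 1`: these inverses exist because `spectralRadius ℝ P < 1`,
nonnegativity is a closed condition, and it propagates from `c` to slightly larger `c'` through
the Neumann series of `(1 - (c' - c) • (1 - c • Pᵀ)⁻¹ Pᵀ)⁻¹`, whose terms are nonnegative.
-/

open Matrix Finset MeasureTheory ProbabilityTheory

noncomputable section

namespace Matrix

def Nonneg {m n : Type*} (A : Matrix m n ℝ) : Prop := ∀ i j, 0 ≤ A i j

namespace Nonneg

theorem one {n : Type*} [DecidableEq n] : Nonneg (1 : Matrix n n ℝ) := fun i j => by
  by_cases h : i = j <;> simp [one_apply, h]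

theorem mul {n : Type*} [Fintype n] {A B : Matrix n n ℝ} (hA : Nonneg A) (hB : Nonneg B) :
    Nonneg (A * B) :=
  fun _ _ => Finset.sum_nonneg fun k _ => mul_nonneg (hA _ k) (hB k _)

theorem pow {n : Type*} [Fintype n] [DecidableEq n] {A : Matrix n n ℝ} (hA : Nonneg A) (k : ℕ) :
    Nonneg (A ^ k) := by
  induction k with
  | zero => exact pow_zero A ▸ one
  | succ k ih => exact pow_succ A k ▸ ih.mul hA

theorem smul {m n : Type*} {A : Matrix m n ℝ} (hA : Nonneg A) {c : ℝ} (hc : 0 ≤ c) :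
    Nonneg (c • A) :=
  fun i j => mul_nonneg hc (hA i j)

theorem tsum {m n : Type*} {f : ℕ → Matrix m n ℝ} (hf : Summable f) (h : ∀ k, Nonneg (f k)) :
    Nonneg (∑' k, f k) := fun i j =>
  (Pi.hasSum.1 (Pi.hasSum.1 hf.hasSum i) j).nonneg fun k => h k i j

theorem mulVec {m n : Type*} [Fintype n] {A : Matrix m n ℝ} (hA : Nonneg A) {x : n → ℝ}
    (hx : 0 ≤ x) : 0 ≤ A *ᵥ x :=
  fun i => Finset.sum_nonneg fun j _ => mul_nonneg (hA i j) (hx j)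

end Nonneg

theorem isClosed_setOf_nonneg {m n : Type*} : IsClosed {A : Matrix m n ℝ | Nonneg A} := by
  simp only [Nonneg, Set.ofPred_forall]
  exact isClosed_iInter fun i => isClosed_iInter fun j =>
    isClosed_le continuous_const ((continuous_apply j).comp (continuous_apply i))

open Filter Topology

section LinftyOp

attribute [local instance] Matrix.linftyOpNormedRing Matrix.linftyOpNormedAlgebra

variable {n : Type*} [Fintype n] [DecidableEq n]

theorem Nonneg.inv_one_sub_of_norm_lt_one {B : Matrix n n ℝ} (hB : Nonneg B) (hnorm : ‖B‖ < 1) :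
    Nonneg (1 - B)⁻¹ := by
  rw [nonsing_inv_eq_ringInverse, ← geom_series_eq_inverse B hnorm]
  exact Nonneg.tsum (summable_geometric_of_norm_lt_one hnorm) hB.pow

theorem Nonneg.inv_one_sub_smul_of_le {Q : Matrix n n ℝ} (hQ : Nonneg Q) {c c' : ℝ}
    (hcc' : c ≤ c') (hU : IsUnit (1 - c • Q)) (hinv : Nonneg (1 - c • Q)⁻¹)
    (hsmall : ‖(c' - c) • ((1 - c • Q)⁻¹ * Q)‖ < 1) : Nonneg (1 - c' • Q)⁻¹ := by
  have hfac : 1 - c' • Q = (1 - c • Q) * (1 - (c' - c) • ((1 - c • Q)⁻¹ * Q)) := by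
    rw [mul_sub, mul_one, mul_smul_comm, ← mul_assoc,
      mul_nonsing_inv _ ((isUnit_iff_isUnit_det _).1 hU), one_mul, sub_smul]
    abel
  rw [hfac, mul_inv_rev]
  exact (Nonneg.inv_one_sub_of_norm_lt_one ((hinv.mul hQ).smul (sub_nonneg.2 hcc')) hsmall).mul hinv

theorem continuousAt_inv_one_sub_smul {Q : Matrix n n ℝ} {c : ℝ} (hU : IsUnit (1 - c • Q)) :
    ContinuousAt (fun c : ℝ => (1 - c • Q)⁻¹) c := by
  have hdet := (isUnit_iff_isUnit_det _).1 hU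
  refine (continuousAt_matrix_inv _ ?_).comp (by fun_prop)
  rw [Ring.inverse_eq_inv']
  exact continuousAt_inv₀ hdet.ne_zero

theorem Nonneg.inv_one_sub {Q : Matrix n n ℝ} (hQ : Nonneg Q)
    (hU : ∀ c ∈ Set.Icc (0 : ℝ) 1, IsUnit (1 - c • Q)) : Nonneg (1 - Q)⁻¹ := by
  set S := {c : ℝ | Nonneg (1 - c • Q)⁻¹}
  have hclosed : IsClosed (S ∩ Set.Icc 0 1) := by
    rw [Set.inter_comm]
    exact ContinuousOn.preimage_isClosed_of_isClosed
      (fun c hc => (continuousAt_inv_one_sub_smul (hU c hc)).continuousWithinAt)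
      isClosed_Icc isClosed_setOf_nonneg
  have h0 : (0 : ℝ) ∈ S := by simpa [S] using Nonneg.one
  have hstep : ∀ c ∈ S ∩ Set.Ico 0 1, S ∈ 𝓝[>] c := by
    rintro c ⟨hcS, hc⟩
    have hsmall : ∀ᶠ c' in 𝓝 c, ‖(c' - c) • ((1 - c • Q)⁻¹ * Q)‖ < 1 :=
      ContinuousAt.eventually_lt (by fun_prop) continuousAt_const (by simp)
    filter_upwards [self_mem_nhdsWithin, nhdsWithin_le_nhds hsmall] with c' hcc' hc'
    exact hQ.inv_one_sub_smul_of_le (le_of_lt hcc') (hU c (Set.Ico_subset_Icc_self hc)) hcS hc'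
  simpa [S] using hclosed.Icc_subset_of_forall_mem_nhdsWithin h0 hstep ⟨zero_le_one, le_rfl⟩

end LinftyOp

end Matrix

theorem isUnit_one_sub_smul_of_spectralRadius_lt_one {A : Type*} [Ring A] [Algebra ℝ A] {a : A}
    (ha : spectralRadius ℝ a < 1) {c : ℝ} (hc : c ∈ Set.Icc (0 : ℝ) 1) : IsUnit (1 - c • a) := by
  rcases hc.1.eq_or_lt with rfl | hc0
  · simp
  have hres : c⁻¹ ∈ resolventSet ℝ a := by
    refine spectrum.mem_resolventSet_of_spectralRadius_lt (ha.trans_le ?_)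
    rw [ENNReal.one_le_coe_iff, ← NNReal.coe_le_coe, coe_nnnorm, NNReal.coe_one, norm_inv,
      Real.norm_of_nonneg hc0.le]
    exact (one_le_inv₀ hc0).2 hc.2
  have : 1 - c • a = c • (algebraMap ℝ A c⁻¹ - a) := by
    rw [smul_sub, Algebra.algebraMap_eq_smul_one, smul_smul, mul_inv_cancel₀ hc0.ne', one_smul]
  rw [this, Algebra.smul_def]
  exact ((isUnit_iff_ne_zero.2 hc0.ne').map (algebraMap ℝ A)).mul hres

theorem Finset.sum_Ioc_reflect {M : Type*} [AddCommMonoid M] (f : ℕ → M) {k n : ℕ} (hkn : k ≤ n) :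
    ∑ ℓ ∈ Ioc 0 k, f (n + 1 - ℓ) = ∑ j ∈ Ioc (n - k) n, f j := by
  refine sum_nbij' (fun ℓ => n + 1 - ℓ) (fun j => n + 1 - j) ?_ ?_ ?_ ?_ fun _ _ => rfl <;>
    · intro ℓ hℓ
      simp only [mem_Ioc] at hℓ ⊢
      omega

namespace IsSPSol

variable {d : ℕ} {M : Matrix (Fin d) (Fin d) ℝ} {a : Fin d → ℝ} {u y z : ℕ → Fin d → ℝ}

theorem monotone_y (h : IsSPSol M a u y z) : Monotone y :=
  monotone_nat_of_le_succ fun m i => sub_nonneg.1 <| by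
    simpa using (h.2.2 (m + 1) (by omega)).2.2.1 i

theorem z_nonneg (h : IsSPSol M a u y z) (ha : 0 ≤ a) : ∀ m, 0 ≤ z m
  | 0 => h.2.1 ▸ ha
  | m + 1 => (h.2.2 (m + 1) (by omega)).2.1

theorem sum_Ioc_eq (h : IsSPSol M a u y z) {m k : ℕ} (hmk : m ≤ k) :
    ∑ j ∈ Ioc m k, u j = z k - z m - M *ᵥ (y k - y m) := by
  induction k, hmk using Nat.le_induction with
  | base => simp
  | succ k hmk ih =>
    rw [sum_Ioc_succ_top hmk, ih, (h.2.2 (k + 1) (by omega)).1]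
    simp only [Nat.add_sub_cancel, mulVec_sub]
    abel

theorem z_eq_zero_of_pos (h : IsSPSol M a u y z) {n : ℕ} (hn : 1 ≤ n)
    (hpos : ∀ i, 0 < y n i - y (n - 1) i) : z n = 0 := by
  obtain ⟨-, hz, -, hcompl⟩ := h.2.2 n hn
  funext i
  have := (sum_eq_zero_iff_of_nonneg fun j _ => mul_nonneg (hz j) (hpos j).le).1 hcompl i
    (mem_univ i)
  exact (mul_eq_zero.1 this).resolve_right (hpos i).ne'

theorem w_eq_of_time_reversal {R : Matrix (Fin d) (Fin d) ℝ} (hR : IsUnit R) {n : ℕ}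
    (hSP : IsSPSol R a u y z) {v w : ℕ → Fin d → ℝ}
    (hdual : IsSPSol R⁻¹ 0 (fun k => -(R⁻¹ *ᵥ u (n + 1 - k))) v w) (hzn : z n = 0)
    {k : ℕ} (hkn : k ≤ n) :
    w k = (y n - y (n - k)) + R⁻¹ *ᵥ z (n - k) + R⁻¹ *ᵥ v k := by
  have hw := hdual.sum_Ioc_eq (Nat.zero_le k)
  rw [hdual.2.1, hdual.1, sum_neg_distrib, ← mulVec_sum, sum_Ioc_reflect _ hkn,
    hSP.sum_Ioc_eq (Nat.sub_le n k), hzn] at hw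
  rw [mulVec_sub, mulVec_sub, mulVec_mulVec, nonsing_inv_mul _ ((isUnit_iff_isUnit_det R).1 hR),
    one_mulVec, mulVec_zero, sub_zero, sub_zero, eq_sub_iff_add_eq] at hw
  rw [← hw]
  abel

end IsSPSol

theorem stmt_9_general {d : ℕ} (P : Matrix (Fin d) (Fin d) ℝ)
    (hnonneg : ∀ i j, 0 ≤ P i j)
    (hspec : spectralRadius ℝ P < 1)
    (n : ℕ) (hn : 1 ≤ n)
    (a : Fin d → ℝ) (ha : ∀ i, 0 ≤ a i) (u y z v w : ℕ → Fin d → ℝ)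
    (hSP : IsSPSol (1 - Pᵀ) a u y z)
    (hdual : IsSPSol (1 - Pᵀ)⁻¹ 0
      (fun k => -((1 - Pᵀ)⁻¹ *ᵥ u (n + 1 - k))) v w)
    (hruin : ∀ i, 0 < y n i - y (n - 1) i) :
    (∀ k, 1 ≤ k → k ≤ n → ∀ i, 0 < w k i) ∧
    (∀ i, ((1 - Pᵀ)⁻¹ *ᵥ a) i < w n i) := by
  have hU : ∀ c ∈ Set.Icc (0 : ℝ) 1, IsUnit (1 - c • Pᵀ) := fun c hc => by
    have := (isUnit_transpose _).2 (isUnit_one_sub_smul_of_spectralRadius_lt_one hspec hc)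
    rwa [transpose_sub, transpose_one, transpose_smul] at this
  have hR : IsUnit (1 - Pᵀ) := by simpa using hU 1 ⟨zero_le_one, le_rfl⟩
  have hRinv : Nonneg (1 - Pᵀ)⁻¹ := Nonneg.inv_one_sub (fun i j => hnonneg j i) hU
  have hv : ∀ k, 0 ≤ v k := fun k => hdual.1 ▸ hdual.monotone_y (Nat.zero_le k)
  have hdom : ∀ k, 1 ≤ k → k ≤ n → ∀ i, ((1 - Pᵀ)⁻¹ *ᵥ z (n - k)) i < w k i := by
    intro k hk hkn i
    have hy : y (n - k) i ≤ y (n - 1) i := hSP.monotone_y (by omega) i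
    have hRv : 0 ≤ ((1 - Pᵀ)⁻¹ *ᵥ v k) i := hRinv.mulVec (hv k) i
    rw [hSP.w_eq_of_time_reversal hR hdual (hSP.z_eq_zero_of_pos hn hruin) hkn]
    simp only [Pi.add_apply, Pi.sub_apply]
    linarith [hruin i]
  refine ⟨fun k hk hkn i => ?_, fun i => ?_⟩
  · exact (hRinv.mulVec (hSP.z_nonneg ha (n - k)) i).trans_lt (hdom k hk hkn i)
  · simpa [hSP.2.1] using hdom n hn le_rfl i

theorem stmt_9 {d : ℕ} (P : Matrix (Fin d) (Fin d) ℝ)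
    (hdiag : ∀ i, P i i = 0) (hnonneg : ∀ i j, 0 ≤ P i j)
    (hspec : spectralRadius ℝ P < 1)
    (n : ℕ) (hn : 1 ≤ n)
    (a : Fin d → ℝ) (ha : ∀ i, 0 ≤ a i) (u y z v w : ℕ → Fin d → ℝ)
    (hSP : IsSPSol (1 - Pᵀ) a u y z)
    (hdual : IsSPSol (1 - Pᵀ)⁻¹ 0
      (fun k => -((1 - Pᵀ)⁻¹ *ᵥ u (n + 1 - k))) v w)
    (hruin : ∀ i, 0 < y n i - y (n - 1) i) :
    (∀ k, 1 ≤ k → k ≤ n → ∀ i, 0 < w k i) ∧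
    (∀ i, ((1 - Pᵀ)⁻¹ *ᵥ a) i < w n i) :=
  stmt_9_general P hnonneg hspec n hn a ha u y z v w hSP hdual hruin
end
end

section
/- Assume (H1)–(H6) and c ≫ 0. Then (i) δ₀ := P(−R⁻¹U_ℓ ≫ 0) > 0 for every ℓ, this probability is the same for all ℓ, and almost surely −R⁻¹U_ℓ ≫ 0 occurs for infinitely many ℓ; (ii) for every b ∈ ℝ₊ᵈ and every ℓ, P(−R⁻¹U_ℓ ≫ b) > 0. -/
open Matrix Finset MeasureTheory ProbabilityTheory

noncomputable section

lemma aux_inv_nonneg {d : ℕ} (P : Matrix (Fin d) (Fin d) ℝ) (hnonneg : ∀ i j, 0 ≤ P i j)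
    (h2 : ∃ k, ∀ i, 0 < (1 - Pᵀ)⁻¹ i k) : ∀ i j, 0 ≤ (1 - Pᵀ)⁻¹ i j := by
  obtain ⟨k, hk⟩ := h2
  set B : Matrix (Fin d) (Fin d) ℝ := Pᵀ with hB
  have hBnn : ∀ i j, 0 ≤ B i j := fun i j => hnonneg j i
  set R : Matrix (Fin d) (Fin d) ℝ := 1 - B with hR
  set Q : Matrix (Fin d) (Fin d) ℝ := R⁻¹ with hQ
  -- invertibility
  have hdet : IsUnit R.det := by
    by_contra h
    have h0 : R⁻¹ = 0 := Matrix.nonsing_inv_apply_not_isUnit R h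
    have := hk k
    rw [hQ, h0] at this
    simp at this
  have hRQ : R * Q = 1 := Matrix.mul_nonsing_inv R hdet
  have hQR : Q * R = 1 := Matrix.nonsing_inv_mul R hdet
  -- the positive vector v
  set v : Fin d → ℝ := fun i => Q i k with hv
  have hvpos : ∀ i, 0 < v i := hk
  have hRv : R *ᵥ v = fun i => (1 : Matrix (Fin d) (Fin d) ℝ) i k := by
    funext i
    simp only [Matrix.mulVec, dotProduct, hv, ← Matrix.mul_apply, hRQ]
  have hBv : ∀ i, (B *ᵥ v) i ≤ v i := by
    intro i
    have h1 : (R *ᵥ v) i = v i - (B *ᵥ v) i := by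
      simp [hR, Matrix.sub_mulVec, Matrix.one_mulVec]
    have h2 : 0 ≤ (R *ᵥ v) i := by
      rw [hRv]
      by_cases h : i = k <;> simp [Matrix.one_apply, h]
    linarith [h1 ▸ h2]
  -- powers of B are nonneg
  have hBpow : ∀ n i j, 0 ≤ (B ^ n) i j := by
    intro n
    induction n with
    | zero => intro i j; by_cases h : i = j <;> simp [Matrix.one_apply, h]
    | succ n ih =>
      intro i j
      rw [pow_succ, Matrix.mul_apply]
      exact Finset.sum_nonneg fun m _ => mul_nonneg (ih i m) (hBnn m j)
  -- w n = B^n *ᵥ v, antitone, nonneg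
  set w : ℕ → Fin d → ℝ := fun n => (B ^ n) *ᵥ v with hw
  have hwnn : ∀ n i, 0 ≤ w n i := by
    intro n i
    simp only [hw, Matrix.mulVec, dotProduct]
    exact Finset.sum_nonneg fun j _ => mul_nonneg (hBpow n i j) (hvpos j).le
  have hwsucc : ∀ n, w (n + 1) = B *ᵥ w n := by
    intro n
    rw [hw]
    simp only [Matrix.mulVec_mulVec, ← pow_succ']
  have hwanti : ∀ i, Antitone fun n => w n i := by
    intro i
    refine antitone_nat_of_succ_le fun n => ?_
    calc w (n + 1) i = ((B ^ n) *ᵥ (B *ᵥ v)) i := by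
          rw [hw, Matrix.mulVec_mulVec, ← pow_succ]
      _ ≤ ((B ^ n) *ᵥ v) i := by
          simp only [Matrix.mulVec, dotProduct]
          apply Finset.sum_le_sum
          intro j _
          exact mul_le_mul_of_nonneg_left (hBv j) (hBpow n i j)
  -- limit L
  set L : Fin d → ℝ := fun i => ⨅ n, w n i with hL
  have htend : ∀ i, Filter.Tendsto (fun n => w n i) Filter.atTop (nhds (L i)) := by
    intro i
    exact tendsto_atTop_ciInf (hwanti i) ⟨0, fun x ⟨n, hn⟩ => hn ▸ hwnn n i⟩
  have htendB : ∀ i, Filter.Tendsto (fun n => (B *ᵥ w n) i) Filter.atTop (nhds ((B *ᵥ L) i)) := by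
    intro i
    simp only [Matrix.mulVec, dotProduct]
    exact tendsto_finset_sum _ fun j _ => (htend j).const_mul _
  have hBL : B *ᵥ L = L := by
    funext i
    have h1 : Filter.Tendsto (fun n => w (n + 1) i) Filter.atTop (nhds (L i)) :=
      (htend i).comp (Filter.tendsto_add_atTop_nat 1)
    have h2 : Filter.Tendsto (fun n => w (n + 1) i) Filter.atTop (nhds ((B *ᵥ L) i)) := by
      simp only [hwsucc]
      exact htendB i
    exact tendsto_nhds_unique h2 h1
  have hL0 : L = 0 := by
    have hRL : R *ᵥ L = 0 := by
      rw [hR, Matrix.sub_mulVec, Matrix.one_mulVec, hBL, sub_self]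
    have : Q *ᵥ (R *ᵥ L) = L := by
      rw [Matrix.mulVec_mulVec, hQR, Matrix.one_mulVec]
    rw [hRL] at this
    rw [← this, Matrix.mulVec_zero]
  -- B^n entries tend to 0
  have hpow0 : ∀ i j, Filter.Tendsto (fun n => (B ^ n) i j) Filter.atTop (nhds 0) := by
    intro i j
    have hub : ∀ n, (B ^ n) i j ≤ w n i / v j := by
      intro n
      rw [le_div_iff₀ (hvpos j)]
      calc (B ^ n) i j * v j ≤ ∑ m, (B ^ n) i m * v m := by
            apply Finset.single_le_sum (f := fun m => (B ^ n) i m * v m)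
            · exact fun m _ => mul_nonneg (hBpow n i m) (hvpos m).le
            · exact Finset.mem_univ j
        _ = w n i := rfl
    have hdiv : Filter.Tendsto (fun n => w n i / v j) Filter.atTop (nhds 0) := by
      have := (htend i).div_const (v j)
      rw [hL0] at this
      simpa using this
    exact squeeze_zero (fun n => hBpow n i j) hub hdiv
  -- partial sums
  intro i j
  have hgeom : ∀ n, (∑ m ∈ Finset.range n, B ^ m) = Q - (B ^ n) * Q := by
    intro n
    have h1 : (∑ m ∈ Finset.range n, B ^ m) * (B - 1) = B ^ n - 1 := geom_sum_mul B n
    have h2 : (∑ m ∈ Finset.range n, B ^ m) * (1 - B) = 1 - B ^ n := by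
      have := congrArg Neg.neg h1
      rw [← mul_neg, neg_sub, neg_sub] at this
      exact this
    have h3 : (∑ m ∈ Finset.range n, B ^ m) * ((1 - B) * Q) = (1 - B ^ n) * Q := by
      rw [← mul_assoc, h2]
    rw [← hR, hRQ, mul_one, sub_mul, one_mul] at h3
    exact h3
  have hSnn : ∀ n, 0 ≤ (∑ m ∈ Finset.range n, B ^ m) i j := by
    intro n
    rw [Matrix.sum_apply]
    exact Finset.sum_nonneg fun m _ => hBpow m i j
  have htendS : Filter.Tendsto (fun n => (∑ m ∈ Finset.range n, B ^ m) i j)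
      Filter.atTop (nhds (Q i j)) := by
    simp only [hgeom, Matrix.sub_apply, Matrix.mul_apply]
    have h1 : Filter.Tendsto (fun n => ∑ m, (B ^ n) i m * Q m j) Filter.atTop (nhds 0) := by
      have := tendsto_finset_sum (Finset.univ : Finset (Fin d))
        (fun m _ => (hpow0 i m).mul_const (Q m j))
      simpa using this
    simpa using (tendsto_const_nhds (x := Q i j)).sub h1
  exact ge_of_tendsto' htendS hSnn


lemma aux_iIndepFun_pair {Ω α β : Type*} [MeasurableSpace Ω] [MeasurableSpace α] [MeasurableSpace β]
    (μ : Measure Ω) [IsProbabilityMeasure μ]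
    (A : ℕ → Ω → α) (X : ℕ → Ω → β)
    (hAmeas : ∀ n, Measurable (A n)) (hXmeas : ∀ n, Measurable (X n))
    (hAiid : iIndepFun A μ)
    (hXiid : iIndepFun X μ)
    (hAX : IndepFun (fun ω => fun n => A n ω) (fun ω => fun n => X n ω) μ) :
    iIndepFun (fun n ω => (A n ω, X n ω)) μ := by
  rw [iIndepFun_iff_iIndep]
  set π : ℕ → Set (Set Ω) := fun n =>
    (Set.preimage (fun ω => (A n ω, X n ω))) ''
      (Set.image2 (· ×ˢ ·) { s : Set α | MeasurableSet s } { t : Set β | MeasurableSet t }) with hπ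
  have hpairmeas : ∀ n, Measurable (fun ω => (A n ω, X n ω)) :=
    fun n => (hAmeas n).prodMk (hXmeas n)
  refine iIndepSets.iIndep (fun n => (hpairmeas n).comap_le) π
    (fun n => ?_) (fun n => ?_) ?_
  · -- pi system
    exact IsPiSystem.comap isPiSystem_prod _
  · -- generateFrom
    rw [← generateFrom_prod, MeasurableSpace.comap_generateFrom]
  · -- independence of the pi systems
    rw [iIndepSets_iff]
    intro S f hf
    have hchoice : ∀ i : ℕ, ∃ (B : Set α) (C : Set β), MeasurableSet B ∧ MeasurableSet C ∧
        (i ∈ S → f i = A i ⁻¹' B ∩ X i ⁻¹' C) := by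
      intro i
      by_cases hi : i ∈ S
      · obtain ⟨s, hs, hfi⟩ := hf i hi
        obtain ⟨B, hB, C, hC, rfl⟩ := hs
        exact ⟨B, C, hB, hC, fun _ => by rw [← hfi, Set.mk_preimage_prod]⟩
      · exact ⟨Set.univ, Set.univ, MeasurableSet.univ, MeasurableSet.univ, fun h => absurd h hi⟩
    choose B C hB hC hf' using hchoice
    have hsplit : (⋂ i ∈ S, f i) = (⋂ i ∈ S, A i ⁻¹' B i) ∩ (⋂ i ∈ S, X i ⁻¹' C i) := by
      ext ω
      simp only [Set.mem_iInter, Set.mem_inter_iff]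
      constructor
      · intro h
        exact ⟨fun i hi => ((hf' i hi ▸ h i hi).1), fun i hi => ((hf' i hi ▸ h i hi).2)⟩
      · intro ⟨h1, h2⟩ i hi
        rw [hf' i hi]
        exact ⟨h1 i hi, h2 i hi⟩
    have hAset : (⋂ i ∈ S, A i ⁻¹' B i) = (fun ω => fun n => A n ω) ⁻¹' (Set.pi ↑S B) := by
      ext ω; simp [Set.mem_pi]
    have hXset : (⋂ i ∈ S, X i ⁻¹' C i) = (fun ω => fun n => X n ω) ⁻¹' (Set.pi ↑S C) := by
      ext ω; simp [Set.mem_pi]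
    have hstep : μ (⋂ i ∈ S, f i) = μ (⋂ i ∈ S, A i ⁻¹' B i) * μ (⋂ i ∈ S, X i ⁻¹' C i) := by
      rw [hsplit, hAset, hXset]
      exact hAX.measure_inter_preimage_eq_mul _ _
        (MeasurableSet.pi (Set.to_countable _) (fun i _ => hB i))
        (MeasurableSet.pi (Set.to_countable _) (fun i _ => hC i))
    have hAprod : μ (⋂ i ∈ S, A i ⁻¹' B i) = ∏ i ∈ S, μ (A i ⁻¹' B i) :=
      hAiid.measure_inter_preimage_eq_mul S (fun i _ => hB i)
    have hXprod : μ (⋂ i ∈ S, X i ⁻¹' C i) = ∏ i ∈ S, μ (X i ⁻¹' C i) :=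
      hXiid.measure_inter_preimage_eq_mul S (fun i _ => hC i)
    have hAXi : ∀ i : ℕ, IndepFun (A i) (X i) μ := by
      intro i
      have := hAX.comp (φ := fun g : ℕ → α => g i) (ψ := fun g : ℕ → β => g i)
        (measurable_pi_apply i : Measurable fun g : ℕ → α => g i) (measurable_pi_apply i : Measurable fun g : ℕ → β => g i)
      exact this
    rw [hstep, hAprod, hXprod, ← Finset.prod_mul_distrib]
    refine Finset.prod_congr rfl fun i hi => ?_
    rw [hf' i hi]
    exact ((hAXi i).measure_inter_preimage_eq_mul _ _ (hB i) (hC i)).symm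


theorem stmt_16 {d : ℕ} {Ω : Type*} [MeasurableSpace Ω]
    (μ : Measure Ω) [IsProbabilityMeasure μ]
    (P : Matrix (Fin d) (Fin d) ℝ)
    (hdiag : ∀ i, P i i = 0) (hnonneg : ∀ i j, 0 ≤ P i j)
    (hspec : spectralRadius ℝ P < 1)
    (A : ℕ → Ω → ℝ) (X : ℕ → Ω → Fin d → ℝ) (c : Fin d → ℝ)
    (hAmeas : ∀ n, Measurable (A n)) (hXmeas : ∀ n, Measurable (X n))
    (hApos : ∀ n ω, 0 < A n ω) (hXnonneg : ∀ n ω i, 0 ≤ X n ω i)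
    (hAiid : iIndepFun A μ)
    (hAid : ∀ n, IdentDistrib (A n) (A 0) μ μ)
    (hXiid : iIndepFun X μ)
    (hXid : ∀ n, IdentDistrib (X n) (X 0) μ μ)
    (hAX : IndepFun (fun ω => fun n => A n ω) (fun ω => fun n => X n ω) μ)
    (hc : ∀ i, 0 < c i)
    (h2 : ∃ k, ∀ i, 0 < (1 - Pᵀ)⁻¹ i k)
    (h6 : ∀ n i, ∀ x : ℝ, 0 ≤ x → 0 < μ {ω | x < X n ω i}) :
    ((∀ ℓ, 0 < μ {ω | ∀ i, 0 < -(((1 - Pᵀ)⁻¹ *ᵥ (A ℓ ω • c - X ℓ ω)) i)}) ∧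
     (∀ ℓ m, μ {ω | ∀ i, 0 < -(((1 - Pᵀ)⁻¹ *ᵥ (A ℓ ω • c - X ℓ ω)) i)}
           = μ {ω | ∀ i, 0 < -(((1 - Pᵀ)⁻¹ *ᵥ (A m ω • c - X m ω)) i)}) ∧
     (∀ᵐ ω ∂μ, ∀ N, ∃ ℓ, N ≤ ℓ ∧
        ∀ i, 0 < -(((1 - Pᵀ)⁻¹ *ᵥ (A ℓ ω • c - X ℓ ω)) i))) ∧
    (∀ b : Fin d → ℝ, (∀ i, 0 ≤ b i) → ∀ ℓ,
      0 < μ {ω | ∀ i, b i < -(((1 - Pᵀ)⁻¹ *ᵥ (A ℓ ω • c - X ℓ ω)) i)}) := by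
  obtain ⟨k, hk⟩ := h2
  set Q : Matrix (Fin d) (Fin d) ℝ := (1 - Pᵀ)⁻¹ with hQdef
  have hQnn : ∀ i j, 0 ≤ Q i j := aux_inv_nonneg P hnonneg ⟨k, hk⟩
  have hpairmeas : ∀ n, Measurable (fun ω => (A n ω, X n ω)) :=
    fun n => (hAmeas n).prodMk (hXmeas n)
  have hAXi : ∀ i : ℕ, IndepFun (A i) (X i) μ := fun i =>
    hAX.comp (φ := fun g : ℕ → ℝ => g i) (ψ := fun g : ℕ → Fin d → ℝ => g i)
      (measurable_pi_apply i) (measurable_pi_apply i)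
  -- measurability of the target sets in the state space
  have hm : ∀ (b : Fin d → ℝ),
      MeasurableSet {p : ℝ × (Fin d → ℝ) | ∀ i, b i < -((Q *ᵥ (p.1 • c - p.2)) i)} := by
    intro b
    rw [Set.setOf_forall]
    refine MeasurableSet.iInter fun i => measurableSet_lt measurable_const ?_
    apply Measurable.neg
    simp only [Matrix.mulVec, dotProduct, Pi.sub_apply, Pi.smul_apply, smul_eq_mul]
    refine Finset.measurable_sum _ fun j _ => ?_
    exact ((measurable_fst.mul_const (c j)).sub
      ((measurable_pi_apply j).comp measurable_snd)).const_mul _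
  -- Part (ii): the key positivity statement
  have key : ∀ (b : Fin d → ℝ), (∀ i, 0 ≤ b i) → ∀ ℓ,
      0 < μ {ω | ∀ i, b i < -((Q *ᵥ (A ℓ ω • c - X ℓ ω)) i)} := by
    intro b hb ℓ
    -- choose N with positive probability that A ℓ ≤ N
    have hN : ∃ N : ℕ, 0 < μ {ω | A ℓ ω ≤ (N : ℝ)} := by
      by_contra h
      push_neg at h
      have h0 : ∀ N : ℕ, μ {ω | A ℓ ω ≤ (N : ℝ)} = 0 :=
        fun N => le_antisymm (h N) (zero_le)
      have hU : (⋃ N : ℕ, {ω | A ℓ ω ≤ (N : ℝ)}) = Set.univ := by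
        ext ω
        simp only [Set.mem_iUnion, Set.mem_setOf_eq, Set.mem_univ, iff_true]
        exact exists_nat_ge (A ℓ ω)
      have hz := measure_iUnion_null h0
      rw [hU] at hz
      simp [measure_univ] at hz
    obtain ⟨N, hNpos⟩ := hN
    -- choose the threshold s
    have hne : (Finset.univ : Finset (Fin d)).Nonempty := ⟨k, Finset.mem_univ k⟩
    set s : ℝ := max (Finset.univ.sup' hne fun i => (b i + N * ((Q *ᵥ c) i)) / Q i k) 0 with hs
    have hs0 : (0:ℝ) ≤ s := le_max_right _ _
    have hsi : ∀ i, (b i + N * ((Q *ᵥ c) i)) / Q i k ≤ s :=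
      fun i => le_trans (Finset.le_sup' (fun i => (b i + N * ((Q *ᵥ c) i)) / Q i k) (Finset.mem_univ i)) (le_max_left _ _)
    -- the event
    have hsub : {ω | A ℓ ω ≤ (N : ℝ)} ∩ {ω | s < X ℓ ω k}
        ⊆ {ω | ∀ i, b i < -((Q *ᵥ (A ℓ ω • c - X ℓ ω)) i)} := by
      rintro ω ⟨hA, hX⟩ i
      have hexpand : -((Q *ᵥ (A ℓ ω • c - X ℓ ω)) i)
          = (∑ j, Q i j * X ℓ ω j) - A ℓ ω * ((Q *ᵥ c) i) := by
        simp only [Matrix.mulVec, dotProduct, Pi.sub_apply, Pi.smul_apply, smul_eq_mul,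
          mul_sub, Finset.sum_sub_distrib, neg_sub, Finset.mul_sum]
        congr 1
        exact Finset.sum_congr rfl fun j _ => by ring
      rw [hexpand]
      have h1 : Q i k * X ℓ ω k ≤ ∑ j, Q i j * X ℓ ω j := by
        apply Finset.single_le_sum (f := fun j => Q i j * X ℓ ω j)
        · exact fun j _ => mul_nonneg (hQnn i j) (hXnonneg ℓ ω j)
        · exact Finset.mem_univ k
      have hQc : 0 ≤ (Q *ᵥ c) i := by
        simp only [Matrix.mulVec, dotProduct]
        exact Finset.sum_nonneg fun j _ => mul_nonneg (hQnn i j) (hc j).le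
      have h2 : A ℓ ω * ((Q *ᵥ c) i) ≤ N * ((Q *ᵥ c) i) :=
        mul_le_mul_of_nonneg_right hA hQc
      have h3 : b i + N * ((Q *ᵥ c) i) ≤ s * Q i k := by
        rw [← div_le_iff₀ (hk i)] at *
        exact hsi i
      have h4 : Q i k * s < Q i k * X ℓ ω k :=
        mul_lt_mul_of_pos_left hX (hk i)
      nlinarith [hk i]
    -- probability of the event
    have hev : 0 < μ ({ω | A ℓ ω ≤ (N : ℝ)} ∩ {ω | s < X ℓ ω k}) := by
      have heq : μ ({ω | A ℓ ω ≤ (N : ℝ)} ∩ {ω | s < X ℓ ω k})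
          = μ {ω | A ℓ ω ≤ (N : ℝ)} * μ {ω | s < X ℓ ω k} := by
        have := (hAXi ℓ).measure_inter_preimage_eq_mul (Set.Iic (N : ℝ)) {x | s < x k}
          measurableSet_Iic (measurableSet_lt measurable_const (measurable_pi_apply k))
        exact this
      rw [heq]
      exact ENNReal.mul_pos hNpos.ne' (h6 ℓ k s hs0).ne'
    exact lt_of_lt_of_le hev (measure_mono hsub)
  -- identical distribution of the pairs
  have hpairid : ∀ ℓ m : ℕ, IdentDistrib (fun ω => (A ℓ ω, X ℓ ω)) (fun ω => (A m ω, X m ω)) μ μ := by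
    intro l m
    refine ⟨(hpairmeas l).aemeasurable, (hpairmeas m).aemeasurable, ?_⟩
    rw [(indepFun_iff_map_prod_eq_prod_map_map (hAmeas l).aemeasurable
      (hXmeas l).aemeasurable).1 (hAXi l),
      (indepFun_iff_map_prod_eq_prod_map_map (hAmeas m).aemeasurable
      (hXmeas m).aemeasurable).1 (hAXi m),
      (hAid l).map_eq, (hXid l).map_eq, (hAid m).map_eq, (hXid m).map_eq]
  -- the events
  set S0 : Set (ℝ × (Fin d → ℝ)) := {p | ∀ i, 0 < -((Q *ᵥ (p.1 • c - p.2)) i)} with hS0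
  have hmS0 : MeasurableSet S0 := hm fun _ => 0
  have hEeq : ∀ ℓ : ℕ, {ω | ∀ i, 0 < -((Q *ᵥ (A ℓ ω • c - X ℓ ω)) i)}
      = (fun ω => (A ℓ ω, X ℓ ω)) ⁻¹' S0 := fun ℓ => rfl
  -- part (i).1
  have part1 : ∀ ℓ, 0 < μ {ω | ∀ i, 0 < -((Q *ᵥ (A ℓ ω • c - X ℓ ω)) i)} := by
    intro ℓ
    exact key (fun _ => 0) (fun i => le_refl 0) ℓ
  -- part (i).2
  have part2 : ∀ ℓ m : ℕ, μ {ω | ∀ i, 0 < -((Q *ᵥ (A ℓ ω • c - X ℓ ω)) i)}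
      = μ {ω | ∀ i, 0 < -((Q *ᵥ (A m ω • c - X m ω)) i)} := by
    intro l m
    rw [hEeq l, hEeq m]
    exact (hpairid l m).measure_mem_eq hmS0
  refine ⟨⟨part1, part2, ?_⟩, key⟩
  -- part (i).3 : infinitely often, via independence
  have hYindep := aux_iIndepFun_pair μ A X hAmeas hXmeas hAiid hXiid hAX
  set E : ℕ → Set Ω := fun ℓ => (fun ω => (A ℓ ω, X ℓ ω)) ⁻¹' S0 with hE
  set δ : ENNReal := μ (E 0) with hδ
  have hδpos : 0 < δ := by
    have := part1 0
    rw [hEeq 0] at this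
    exact this
  have hEδ : ∀ ℓ, μ (E ℓ) = δ := by
    intro ℓ
    rw [hδ]
    exact (hpairid ℓ 0).measure_mem_eq hmS0
  have hEcompl : ∀ ℓ, μ ((E ℓ)ᶜ) = 1 - δ := by
    intro ℓ
    rw [prob_compl_eq_one_sub (hmS0.preimage (hpairmeas ℓ)), hEδ ℓ]
  have hnull : ∀ N : ℕ, μ (⋂ (ℓ) (_ : N ≤ ℓ), (E ℓ)ᶜ) = 0 := by
    intro N
    have hbound : ∀ m : ℕ, μ (⋂ (ℓ) (_ : N ≤ ℓ), (E ℓ)ᶜ) ≤ (1 - δ) ^ m := by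
      intro m
      have hmono : (⋂ (ℓ) (_ : N ≤ ℓ), (E ℓ)ᶜ) ⊆ ⋂ ℓ ∈ Finset.Ico N (N + m), (E ℓ)ᶜ := by
        intro ω hω
        simp only [Set.mem_iInter] at hω ⊢
        intro ℓ hℓ
        exact hω ℓ (Finset.mem_Ico.1 hℓ).1
      have hprod : μ (⋂ ℓ ∈ Finset.Ico N (N + m), (E ℓ)ᶜ) = ∏ ℓ ∈ Finset.Ico N (N + m), μ ((E ℓ)ᶜ) := by
        have := hYindep.measure_inter_preimage_eq_mul (Finset.Ico N (N + m))
          (sets := fun _ => S0ᶜ) (fun i _ => hmS0.compl)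
        simpa [Set.preimage_compl] using this
      calc μ (⋂ (ℓ) (_ : N ≤ ℓ), (E ℓ)ᶜ) ≤ μ (⋂ ℓ ∈ Finset.Ico N (N + m), (E ℓ)ᶜ) :=
            measure_mono hmono
        _ = ∏ ℓ ∈ Finset.Ico N (N + m), μ ((E ℓ)ᶜ) := hprod
        _ = (1 - δ) ^ m := by
            rw [Finset.prod_congr rfl fun ℓ _ => hEcompl ℓ, Finset.prod_const,
              Nat.card_Ico, Nat.add_sub_cancel_left]
    have hlim : Filter.Tendsto (fun m => (1 - δ) ^ m) Filter.atTop (nhds 0) :=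
      ENNReal.tendsto_pow_atTop_nhds_zero_of_lt_one
        (ENNReal.sub_lt_self ENNReal.one_ne_top one_ne_zero hδpos.ne')
    have := ge_of_tendsto' hlim hbound
    exact le_antisymm this (zero_le)
  have hUnull : μ (⋃ N : ℕ, ⋂ (ℓ) (_ : N ≤ ℓ), (E ℓ)ᶜ) = 0 := measure_iUnion_null hnull
  rw [MeasureTheory.ae_iff]
  refine measure_mono_null ?_ hUnull
  intro ω hω
  simp only [Set.mem_setOf_eq] at hω
  push_neg at hω
  obtain ⟨N, hN⟩ := hω
  refine Set.mem_iUnion.2 ⟨N, ?_⟩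
  simp only [Set.mem_iInter]
  intro ℓ hℓ
  simp only [Set.mem_compl_iff]
  intro hmem
  obtain ⟨i, hi⟩ := hN ℓ hℓ
  exact absurd (hmem i) (not_lt.2 hi)
end
end
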